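/- Let C be a coalgebra over a field that is left artinian (C is an artinian left C-comodule) and right semiperfect (every indecomposable injective left C-comodule is finite dimensional). Then C is finite dimensional. -/

import Mathlib

open TensorProduct CategoryTheory

noncomputable section

universe u

variable (k : Type u) [Field k]
variable (C : Type u) [AddCommGroup C] [Module k C] [Coalgebra k C]

/-- A (bundled) left `C`-comodule. -/
structure LeftComod where
  V : Type u
  [addCommGroup : AddCommGroup V]
  [module : Module k V]
  ρ : V →ₗ[k] C ⊗[k] V
  coassoc : (TensorProduct.assoc k C C V).toLinearMap ∘ₗ
      LinearMap.rTensor V (Coalgebra.comul (R := k) (A := C)) ∘ₗ ρ =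
    LinearMap.lTensor C ρ ∘ₗ ρ
  counit_comp : (TensorProduct.lid k V).toLinearMap ∘ₗ
      LinearMap.rTensor V (Coalgebra.counit (R := k) (A := C)) ∘ₗ ρ = LinearMap.id

attribute [instance] LeftComod.addCommGroup LeftComod.module

variable {k C}

/-- Morphisms of left `C`-comodules. -/
@[ext]
structure ComodHom (X Y : LeftComod k C) where
  f : X.V →ₗ[k] Y.V
  comm : Y.ρ ∘ₗ f = LinearMap.lTensor C f ∘ₗ X.ρ

/-- The category of left `C`-comodules. -/
instance : Category (LeftComod k C) where
  Hom := ComodHom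
  id X := ⟨LinearMap.id, by rw [LinearMap.lTensor_id, LinearMap.comp_id, LinearMap.id_comp]⟩
  comp {X Y Z} u v := ⟨v.f ∘ₗ u.f, by
    rw [← LinearMap.comp_assoc, v.comm, LinearMap.comp_assoc, u.comm,
      ← LinearMap.comp_assoc, ← LinearMap.lTensor_comp]⟩
  id_comp u := ComodHom.ext (LinearMap.comp_id _)
  comp_id u := ComodHom.ext (LinearMap.id_comp _)
  assoc u v w := ComodHom.ext (LinearMap.comp_assoc _ _ _).symm

variable (k C)

/-- A subspace `V ⊆ C` is a left subcomodule of `C` (with coaction `Δ`):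
`Δ(V) ⊆ C ⊗ V`. -/
def IsLeftSubcomoduleOfC (V : Submodule k C) : Prop :=
  ∀ v ∈ V, Coalgebra.comul (R := k) v ∈
    LinearMap.range (LinearMap.lTensor C V.subtype)

variable {k C}

/-- An indecomposable comodule: nonzero, and the only idempotent endomorphisms are
`0` and the identity. -/
def Indecomposable (Q : LeftComod k C) : Prop :=
  Nontrivial Q.V ∧ ∀ e : Q ⟶ Q, e ≫ e = e → e = 𝟙 Q ∨ e.f = 0

/-! Over a left artinian coalgebra, every direct summand of `C` is a finite sum of indecomposable
direct summands: split a direct summand `U` of `C` along a nontrivial idempotent endomorphism into two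
strictly smaller direct summands, and apply well-founded induction on the (artinian) lattice of
subcomodules. Since `C` is an injective comodule (it is cofree: comodule maps `X ⟶ C` are given
by functionals on `X`), every direct summand of `C` is injective, so the indecomposable ones are
finite dimensional by right semiperfectness; hence so is `C`. -/

open LinearMap

section TensorNaturality

variable {R A B D M N : Type*} [CommSemiring R] [AddCommMonoid A] [AddCommMonoid B]
  [AddCommMonoid D] [AddCommMonoid M] [AddCommMonoid N] [Module R A] [Module R B] [Module R D]
  [Module R M] [Module R N]

lemma assoc_rTensor_lTensor (g : A →ₗ[R] B ⊗[R] D) (f : M →ₗ[R] N) (y : A ⊗[R] M) :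
    TensorProduct.assoc R B D N (rTensor N g (lTensor A f y)) =
      lTensor B (lTensor D f) (TensorProduct.assoc R B D M (rTensor M g y)) := by
  induction y using TensorProduct.induction_on with
  | zero => simp
  | tmul a m =>
    simp only [rTensor_tmul, lTensor_tmul]
    induction g a using TensorProduct.induction_on <;> simp_all [TensorProduct.add_tmul]
  | add _ _ h₁ h₂ => simp_all

lemma lid_rTensor_lTensor (g : A →ₗ[R] R) (f : M →ₗ[R] N) (y : A ⊗[R] M) :
    TensorProduct.lid R N (rTensor N g (lTensor A f y)) =
      f (TensorProduct.lid R M (rTensor M g y)) := by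
  induction y using TensorProduct.induction_on <;> simp_all

lemma apply_rid_lTensor (g : A →ₗ[R] B ⊗[R] D) (ψ : M →ₗ[R] R) (y : A ⊗[R] M) :
    g (TensorProduct.rid R A (lTensor A ψ y)) =
      lTensor B (TensorProduct.rid R D ∘ₗ lTensor D ψ)
        (TensorProduct.assoc R B D M (rTensor M g y)) := by
  induction y using TensorProduct.induction_on with
  | zero => simp
  | tmul a m =>
    simp only [rTensor_tmul, lTensor_tmul, TensorProduct.rid_tmul, map_smul]
    induction g a using TensorProduct.induction_on <;>
      simp_all [TensorProduct.add_tmul, TensorProduct.tmul_smul]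
  | add _ _ h₁ h₂ => simp_all

end TensorNaturality

namespace ComodHom

variable {X Y Z : LeftComod k C}

@[simp] lemma comp_f (u : X ⟶ Y) (v : Y ⟶ Z) : (u ≫ v).f = v.f ∘ₗ u.f := rfl

@[simp] lemma id_f (X : LeftComod k C) : (𝟙 X : X ⟶ X).f = LinearMap.id := rfl

protected def zero (X Y : LeftComod k C) : X ⟶ Y :=
  ⟨0, by rw [comp_zero, lTensor_zero, zero_comp]⟩

lemma ρ_comp_of_comp_eq (i : Z ⟶ X) (hi : Function.Injective (lTensor C i.f)) (g : Y ⟶ X)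
    {f : Y.V →ₗ[k] Z.V} (hf : i.f ∘ₗ f = g.f) : Z.ρ ∘ₗ f = lTensor C f ∘ₗ Y.ρ := by
  refine LinearMap.ext fun y => hi ?_
  have h : lTensor C i.f ∘ₗ Z.ρ ∘ₗ f = lTensor C i.f ∘ₗ lTensor C f ∘ₗ Y.ρ := by
    rw [← comp_assoc, ← i.comm, comp_assoc, hf, ← comp_assoc, ← lTensor_comp, hf, g.comm]
  exact congr($h y)

def idSub (e : X ⟶ X) : X ⟶ X :=
  ⟨LinearMap.id - e.f, by
    rw [comp_sub, lTensor_sub, LinearMap.sub_comp, e.comm, lTensor_id, comp_id, id_comp]⟩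

lemma idSub_f_apply (e : X ⟶ X) (x : X.V) : (idSub e).f x = x - e.f x := rfl

lemma idSub_idem {e : X ⟶ X} (he : e ≫ e = e) : idSub e ≫ idSub e = idSub e := by
  have he' : ∀ x, e.f (e.f x) = e.f x := fun x => congr($(congrArg ComodHom.f he) x)
  refine ComodHom.ext (LinearMap.ext fun x => ?_)
  simp [idSub, he']

lemma idSub_ne_id {e : X ⟶ X} (he : e.f ≠ 0) : idSub e ≠ 𝟙 X := by
  intro h
  refine he (LinearMap.ext fun x => ?_)
  simpa [idSub] using congr($(congrArg ComodHom.f h) x)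

end ComodHom

namespace LeftComod

variable {X Y : LeftComod k C}

lemma coassoc_apply (x : X.V) :
    TensorProduct.assoc k C C X.V (rTensor X.V Coalgebra.comul (X.ρ x)) = lTensor C X.ρ (X.ρ x) :=
  congr($(X.coassoc) x)

lemma counit_comp_apply (x : X.V) :
    TensorProduct.lid k X.V (rTensor X.V Coalgebra.counit (X.ρ x)) = x :=
  congr($(X.counit_comp) x)

def IsSubcomod (X : LeftComod k C) (U : Submodule k X.V) : Prop :=
  ∀ u ∈ U, X.ρ u ∈ range (lTensor C U.subtype)

abbrev Subcomod (X : LeftComod k C) := {U : Submodule k X.V // X.IsSubcomod U}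

namespace Subcomod

section

variable (U : X.Subcomod)

lemma lTensor_subtype_injective : Function.Injective (lTensor C U.1.subtype) :=
  Module.Flat.lTensor_preserves_injective_linearMap _ U.1.injective_subtype

def ρ : U.1 →ₗ[k] C ⊗[k] U.1 :=
  (LinearEquiv.ofInjective _ U.lTensor_subtype_injective).symm.toLinearMap ∘ₗ
    codRestrict _ (X.ρ ∘ₗ U.1.subtype) fun u => U.2 u.1 u.2

lemma lTensor_subtype_ρ (u : U.1) : lTensor C U.1.subtype (U.ρ u) = X.ρ u :=
  congrArg Subtype.val ((LinearEquiv.ofInjective _ U.lTensor_subtype_injective).apply_symm_apply _)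

abbrev toComod : LeftComod k C where
  V := U.1
  ρ := U.ρ
  coassoc := LinearMap.ext fun u => by
    apply Module.Flat.lTensor_preserves_injective_linearMap _ U.lTensor_subtype_injective
    have hρ : lTensor C U.1.subtype ∘ₗ U.ρ = X.ρ ∘ₗ U.1.subtype :=
      LinearMap.ext U.lTensor_subtype_ρ
    simp only [LinearMap.comp_apply, LinearEquiv.coe_coe]
    rw [← assoc_rTensor_lTensor, U.lTensor_subtype_ρ, ← lTensor_comp_apply, hρ,
      lTensor_comp_apply, U.lTensor_subtype_ρ]
    exact X.coassoc_apply u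
  counit_comp := LinearMap.ext fun u => Subtype.ext <| by
    simp only [LinearMap.comp_apply, LinearEquiv.coe_coe, LinearMap.id_apply]
    rw [← Submodule.subtype_apply, ← lid_rTensor_lTensor, U.lTensor_subtype_ρ]
    exact X.counit_comp_apply u

def ι : U.toComod ⟶ X :=
  ⟨U.1.subtype, (LinearMap.ext U.lTensor_subtype_ρ).symm⟩

def lift (g : Y ⟶ X) (hg : ∀ y, g.f y ∈ U.1) : Y ⟶ U.toComod where
  f := codRestrict U.1 g.f hg
  comm := U.ι.ρ_comp_of_comp_eq U.lTensor_subtype_injective g rfl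

def IsSummand : Prop := ∃ r : X ⟶ U.toComod, U.ι ≫ r = 𝟙 _

end

def range (g : Y ⟶ X) : X.Subcomod :=
  ⟨LinearMap.range g.f, by
    rintro _ ⟨y, rfl⟩
    refine ⟨lTensor C g.f.rangeRestrict (Y.ρ y), ?_⟩
    rw [← lTensor_comp_apply]
    exact congr($(g.comm) y).symm⟩

def ker (g : X ⟶ Y) : X.Subcomod :=
  ⟨LinearMap.ker g.f, fun x hx =>
    (Module.Flat.lTensor_exact C (LinearMap.exact_subtype_ker_map g.f) _).mp <| by
      rw [← LinearMap.comp_apply, ← g.comm, LinearMap.comp_apply, LinearMap.mem_ker.mp hx,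
        map_zero]⟩

/-- `s ≫ g` is an idempotent endomorphism of `X` with the same range as `g`. -/
lemma isSummand_range (g : Y ⟶ X) (s : X ⟶ Y) (h : g ≫ s ≫ g = g) : (range g).IsSummand := by
  refine ⟨s ≫ (range g).lift g (LinearMap.mem_range_self g.f), ComodHom.ext ?_⟩
  ext ⟨_, y, rfl⟩
  exact congr($(congrArg ComodHom.f h) y)

variable {U : X.Subcomod}

lemma range_comp_ι_lt {e : U.toComod ⟶ U.toComod} (he : e ≫ e = e) (hne : e ≠ 𝟙 _) :
    range (e ≫ U.ι) < U := by
  refine lt_of_le_of_ne (fun _ ⟨u, hu⟩ => hu ▸ (e.f u).2) fun heq => hne (ComodHom.ext ?_)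
  ext v
  obtain ⟨u, hu⟩ : U.ι.f v ∈ (range (e ≫ U.ι)).1 := by
    rw [heq]; exact v.2
  have hu : e.f u = v := Subtype.ext hu
  rw [← hu]
  exact congr($(congrArg ComodHom.f he) u)

lemma le_range_sup_range_idSub (e : U.toComod ⟶ U.toComod) :
    U.1 ≤ (range (e ≫ U.ι)).1 ⊔ (range (ComodHom.idSub e ≫ U.ι)).1 := fun v hv => by
  have : v = U.ι.f (e.f ⟨v, hv⟩) + U.ι.f ((ComodHom.idSub e).f ⟨v, hv⟩) := by
    rw [ComodHom.idSub_f_apply, map_sub]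
    exact (add_sub_cancel _ _).symm
  exact this ▸ Submodule.add_mem_sup ⟨_, rfl⟩ ⟨_, rfl⟩

lemma injective_of_isSummand [Injective X] (hU : U.IsSummand) : Injective U.toComod :=
  have ⟨r, hr⟩ := hU
  (Retract.mk U.ι r hr).injective

theorem finiteDimensional_of_isSummand [WellFoundedLT X.Subcomod]
    (h : ∀ U : X.Subcomod, U.IsSummand → Indecomposable U.toComod → FiniteDimensional k U.1)
    (hU : U.IsSummand) : FiniteDimensional k U.1 := by
  induction U using WellFoundedLT.induction with
  | ind U ih =>
  by_cases hnt : Nontrivial U.1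
  swap
  · have := not_nontrivial_iff_subsingleton.mp hnt
    infer_instance
  by_cases hind : ∀ e : U.toComod ⟶ U.toComod, e ≫ e = e → e = 𝟙 _ ∨ e.f = 0
  · exact h U hU ⟨hnt, hind⟩
  push Not at hind
  obtain ⟨e, he, hne_id, hne_zero⟩ := hind
  obtain ⟨r, hr⟩ := hU
  have hsummand (e' : U.toComod ⟶ U.toComod) (he' : e' ≫ e' = e') :
      (range (e' ≫ U.ι)).IsSummand :=
    isSummand_range _ r (by simp only [Category.assoc, reassoc_of% hr, reassoc_of% he'])
  have he' := ComodHom.idSub_idem he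
  have hfin := ih _ (range_comp_ι_lt he hne_id) (hsummand e he)
  have hfin' := ih _ (range_comp_ι_lt he' (ComodHom.idSub_ne_id hne_zero)) (hsummand _ he')
  exact Submodule.finiteDimensional_of_le (le_range_sup_range_idSub e)

end Subcomod

theorem finiteDimensional_of_wellFoundedLT (X : LeftComod k C) [WellFoundedLT X.Subcomod]
    (h : ∀ U : X.Subcomod, U.IsSummand → Indecomposable U.toComod → FiniteDimensional k U.1) :
    FiniteDimensional k X.V := by
  have hfin := Subcomod.finiteDimensional_of_isSummand h (Subcomod.isSummand_range (𝟙 X) (𝟙 X) rfl)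
  have htop : (Subcomod.range (𝟙 X)).1 = ⊤ := LinearMap.range_id
  rw [htop] at hfin
  exact Module.Finite.equiv (Submodule.topEquiv (R := k) (M := X.V))

lemma wellFoundedLT_subcomod
    (h : ∀ f : ℕ → Submodule k X.V, (∀ n, X.IsSubcomod (f n)) →
      (∀ n, f (n + 1) ≤ f n) → ∃ N, ∀ m, N ≤ m → f m = f N) :
    WellFoundedLT X.Subcomod := by
  refine ⟨RelEmbedding.wellFounded_iff_isEmpty.mpr ⟨fun f => ?_⟩⟩
  have hlt (n : ℕ) : f (n + 1) < f n := f.map_rel_iff.mpr n.lt_succ_self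
  obtain ⟨N, hN⟩ := h (fun n => (f n).1) (fun n => (f n).2) fun n => (hlt n).le
  exact (hlt N).ne (Subtype.ext (hN _ N.le_succ))

lemma injective_f_of_mono (g : X ⟶ Y) [Mono g] : Function.Injective g.f := by
  have hK : (Subcomod.ker g).ι = ComodHom.zero _ _ := (cancel_mono g).mp <|
    ComodHom.ext (LinearMap.ext fun x => x.2.trans (map_zero g.f).symm)
  rw [← LinearMap.ker_eq_bot, eq_bot_iff]
  exact fun x hx => congr(($(congrArg ComodHom.f hK) ⟨x, hx⟩ : X.V))

variable (k C) in
abbrev regular : LeftComod k C where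
  V := C
  ρ := Coalgebra.comul
  coassoc := Coalgebra.coassoc
  counit_comp := by ext c; simp

def toRegular (X : LeftComod k C) (ψ : X.V →ₗ[k] k) : X ⟶ regular k C where
  f := (TensorProduct.rid k C).toLinearMap ∘ₗ lTensor C ψ ∘ₗ X.ρ
  comm := LinearMap.ext fun x => by
    have h := apply_rid_lTensor Coalgebra.comul ψ (X.ρ x)
    rw [X.coassoc_apply, ← lTensor_comp_apply] at h
    exact h

lemma comp_toRegular (f : X ⟶ Y) (ψ : Y.V →ₗ[k] k) :
    f ≫ toRegular Y ψ = toRegular X (ψ ∘ₗ f.f) := by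
  refine ComodHom.ext ?_
  simp only [ComodHom.comp_f, toRegular, comp_assoc, ← f.comm, lTensor_comp]

lemma toRegular_counit_comp (g : X ⟶ regular k C) :
    toRegular X (Coalgebra.counit ∘ₗ g.f) = g := by
  refine ComodHom.ext (LinearMap.ext fun x => ?_)
  simp only [toRegular, lTensor_comp, LinearMap.comp_apply, LinearEquiv.coe_coe]
  rw [← LinearMap.comp_apply (lTensor C g.f), ← g.comm]
  simp [Coalgebra.lTensor_counit_comul]

instance : Injective (regular k C) where
  factors {X Y} g f _ := by
    obtain ⟨h, hh⟩ := f.f.exists_leftInverse_of_injective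
      (LinearMap.ker_eq_bot.mpr (injective_f_of_mono f))
    refine ⟨toRegular Y (Coalgebra.counit ∘ₗ g.f ∘ₗ h), ?_⟩
    rw [comp_toRegular, comp_assoc, comp_assoc, hh, comp_id, toRegular_counit_comp]

end LeftComod

/-- a coalgebra `C` over a field which is left artinian (DCC on left
subcomodules of `C`) and right semiperfect (every indecomposable injective left
`C`-comodule is finite dimensional) is finite dimensional. -/
theorem statement19
    (hart : ∀ f : ℕ → Submodule k C, (∀ n, IsLeftSubcomoduleOfC k C (f n)) →
      (∀ n, f (n + 1) ≤ f n) → ∃ N, ∀ m, N ≤ m → f m = f N)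
    (hsp : ∀ Q : LeftComod k C, Injective Q → Indecomposable Q →
      FiniteDimensional k Q.V) :
    FiniteDimensional k C := by
  have : WellFoundedLT (LeftComod.regular k C).Subcomod := LeftComod.wellFoundedLT_subcomod hart
  exact (LeftComod.regular k C).finiteDimensional_of_wellFoundedLT
    fun U hU hind => hsp _ (LeftComod.Subcomod.injective_of_isSummand hU) hind
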